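/- (Theorem 6(1), attainment of the merit minimum for QPs.) In the QP setting, for every t ∈ ℝ the infimum of (x,s) ↦ r(x,s,t) over ℝ^n × ℝ^m is attained: there exists (x̄,s̄) with r(x̄,s̄,t) ≤ r(x,s,t) for all (x,s). -/

import Mathlib

/-!
Minimizing out `s` coordinatewise (the distance to the orthant is the norm of the negative part)
turns `r · · t` into `x ↦ ½ (q x - t)₊² + ¼ ∑ᵢ ((A x - b)ᵢ)₊²`, a nondecreasing function of the
vector `(q x, A x)`. Its minimum is attained because the set of right-hand sides `w` for which
`q x ≤ w₀, (A x)ᵢ ≤ wᵢ` is solvable is closed.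

Closedness holds for any finite system of convex quadratic inequalities, by induction on the number
of inequalities. For right-hand sides `w j → w` take minimal-norm solutions `x j`. If a subsequence
is bounded, a limit point solves the limit system. Otherwise a limit direction `d` of `x j / ‖x j‖`
lies in the kernel of every quadratic part and has nonpositive linear part, so every constraint is
affine and nonincreasing along `d`. If one of them strictly decreases along `d`, solve the system
without it (induction) and move far along `d`; if none does, `x j - τ • d` stays feasible, so
minimality forces `x j ⟂ d`, which is impossible for large `j`.
-/

open Filter Topology Metric
open scoped RealInnerProductSpace

section InnerProductSpace

variable {E : Type*} [NormedAddCommGroup E] [InnerProductSpace ℝ E]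

theorem LinearMap.IsPositive.apply_eq_zero_of_inner_eq_zero {T : E →ₗ[ℝ] E}
    (hT : T.IsPositive) {x : E} (hx : ⟪x, T x⟫ = 0) : T x = 0 := by
  have horth : ∀ y, ⟪T x, y⟫ = 0 := fun y => by
    have hdisc := discrim_le_zero (a := ⟪y, T y⟫) (b := 2 * ⟪T x, y⟫) (c := 0) fun τ => by
      have := hT.inner_nonneg_right (x + τ • y)
      rw [map_add, map_smul, inner_add_left, inner_add_right, inner_add_right,
        real_inner_smul_left, real_inner_smul_right, real_inner_smul_left,
        real_inner_smul_right, hx, ← hT.isSymmetric x y, real_inner_comm (T x) y] at this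
      linarith
    rw [discrim] at hdisc
    nlinarith [sq_nonneg ⟪T x, y⟫]
  exact inner_self_eq_zero.1 (horth (T x))

theorem inner_eq_zero_of_forall_norm_le_norm_add_smul {x d : E}
    (h : ∀ τ : ℝ, ‖x‖ ≤ ‖x + τ • d‖) : ⟪x, d⟫ = 0 := by
  have hdisc := discrim_le_zero (a := ‖d‖ ^ 2) (b := 2 * ⟪x, d⟫) (c := 0) fun τ => by
    have hsq := pow_le_pow_left₀ (norm_nonneg x) (h τ) 2
    rw [norm_add_sq_real, real_inner_smul_right, norm_smul, mul_pow, Real.norm_eq_abs,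
      sq_abs] at hsq
    linarith
  rw [discrim] at hdisc
  nlinarith [sq_nonneg ⟪x, d⟫]

end InnerProductSpace

section ProperSpace

variable {E : Type*} [NormedAddCommGroup E] [ProperSpace E]

theorem IsClosed.exists_norm_le {S : Set E} (hS : IsClosed S) (hne : S.Nonempty) :
    ∃ x ∈ S, ∀ y ∈ S, ‖x‖ ≤ ‖y‖ := by
  obtain ⟨x, hxS, hx⟩ := hS.exists_infDist_eq_dist hne 0
  refine ⟨x, hxS, fun y hy => ?_⟩
  have := infDist_le_dist_of_mem (x := (0 : E)) hy
  rwa [hx, dist_zero_left, dist_zero_left] at this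

theorem exists_subseq_tendsto_or_tendsto_norm_atTop (x : ℕ → E) :
    (∃ a, ∃ φ : ℕ → ℕ, StrictMono φ ∧ Tendsto (x ∘ φ) atTop (𝓝 a)) ∨
      Tendsto (fun j => ‖x j‖) atTop atTop := by
  refine or_iff_not_imp_right.2 fun h => ?_
  obtain ⟨R, hR⟩ : ∃ R, ∃ᶠ j in atTop, x j ∈ closedBall (0 : E) R := by
    simp only [Filter.tendsto_atTop, not_forall, not_eventually, not_le] at h
    obtain ⟨R, hR⟩ := h
    exact ⟨R, hR.mono fun j hj => mem_closedBall_zero_iff.2 hj.le⟩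
  obtain ⟨a, -, φ, hφ, ha⟩ := (isCompact_closedBall 0 R).tendsto_subseq' hR
  exact ⟨a, φ, hφ, ha⟩

theorem exists_subseq_tendsto_inv_norm_smul [NormedSpace ℝ E] {x : ℕ → E}
    (hx : Tendsto (fun j => ‖x j‖) atTop atTop) :
    ∃ d, ‖d‖ = 1 ∧ ∃ φ : ℕ → ℕ, StrictMono φ ∧
      Tendsto (fun j => ‖x (φ j)‖⁻¹ • x (φ j)) atTop (𝓝 d) := by
  have hsphere : ∃ᶠ j in atTop, ‖x j‖⁻¹ • x j ∈ sphere (0 : E) 1 := by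
    refine ((hx.eventually_gt_atTop 0).mono fun j hj => ?_).frequently
    rw [mem_sphere_zero_iff_norm, norm_smul, norm_inv, norm_norm, inv_mul_cancel₀ hj.ne']
  obtain ⟨d, hd, φ, hφ, hdt⟩ := (isCompact_sphere 0 1).tendsto_subseq' hsphere
  exact ⟨d, mem_sphere_zero_iff_norm.1 hd, φ, hφ, hdt⟩

end ProperSpace

section ConvexQuadratic

variable {E : Type*} [NormedAddCommGroup E] [InnerProductSpace ℝ E]

def IsConvexQuadratic (f : E → ℝ) : Prop :=
  ∃ (Q : E →ₗ[ℝ] E) (π : E →ₗ[ℝ] ℝ) (c : ℝ), Q.IsPositive ∧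
    ∀ x, f x = 1 / 2 * ⟪x, Q x⟫ + π x + c

namespace IsConvexQuadratic

variable [FiniteDimensional ℝ E] {f : E → ℝ}

theorem continuous (hf : IsConvexQuadratic f) : Continuous f := by
  obtain ⟨Q, π, c, -, hf⟩ := hf
  rw [funext hf]
  have := Q.continuous_of_finiteDimensional
  have := π.continuous_of_finiteDimensional
  fun_prop

theorem exists_nonpos_slope_of_tendsto (hf : IsConvexQuadratic f)
    {α : Type*} {l : Filter α} [l.NeBot] {x : α → E} {w : α → ℝ} {w₀ : ℝ} {d : E}
    (hx : Tendsto (fun j => ‖x j‖) l atTop) (hd : Tendsto (fun j => ‖x j‖⁻¹ • x j) l (𝓝 d))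
    (hw : Tendsto w l (𝓝 w₀)) (hfw : ∀ j, f (x j) ≤ w j) :
    ∃ σ ≤ 0, ∀ y (τ : ℝ), f (y + τ • d) = f y + τ * σ := by
  obtain ⟨Q, π, c, hQ, hf⟩ := hf
  simp only [hf] at hfw ⊢
  set u := fun j => ‖x j‖⁻¹ • x j
  have hinv : Tendsto (fun j => ‖x j‖⁻¹) l (𝓝 0) := tendsto_inv_atTop_zero.comp hx
  have hπ : Tendsto (fun j => π (u j)) l (𝓝 (π d)) :=
    (π.continuous_of_finiteDimensional.tendsto d).comp hd
  have hQd : Q d = 0 := by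
    refine hQ.apply_eq_zero_of_inner_eq_zero (le_antisymm ?_ (hQ.inner_nonneg_right d))
    have hlim : Tendsto (fun j => ⟪u j, Q (u j)⟫) l (𝓝 ⟪d, Q d⟫) :=
      ((continuous_id.inner Q.continuous_of_finiteDimensional).tendsto d).comp hd
    have hbound : ∀ j, 1 / 2 * ⟪u j, Q (u j)⟫ ≤
        ‖x j‖⁻¹ * (‖x j‖⁻¹ * (w j - c)) - ‖x j‖⁻¹ * π (u j) := fun j => by
      have hN := inv_nonneg.2 (norm_nonneg (x j))
      have := mul_le_mul_of_nonneg_left (mul_le_mul_of_nonneg_left (hfw j) hN) hN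
      simp only [u, map_smul, real_inner_smul_left, real_inner_smul_right, smul_eq_mul]
      nlinarith
    have := le_of_tendsto_of_tendsto' (hlim.const_mul (1 / 2))
      ((hinv.mul (hinv.mul (hw.sub_const c))).sub (hinv.mul hπ)) hbound
    simp only [zero_mul, sub_zero] at this
    linarith
  have hπd : π d ≤ 0 := by
    have hbound : ∀ j, π (u j) ≤ ‖x j‖⁻¹ * (w j - c) := fun j => by
      have hπx : π (x j) ≤ w j - c := by linarith [hfw j, hQ.inner_nonneg_right (x j)]
      simpa only [u, map_smul, smul_eq_mul] using
        mul_le_mul_of_nonneg_left hπx (inv_nonneg.2 (norm_nonneg (x j)))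
    simpa using le_of_tendsto_of_tendsto' hπ (hinv.mul (hw.sub_const c)) hbound
  refine ⟨π d, hπd, fun y τ => ?_⟩
  have hdQ : ⟪d, Q y⟫ = 0 := by rw [← hQ.isSymmetric, hQd, inner_zero_left]
  simp only [map_add, map_smul, hQd, smul_zero, add_zero, inner_add_left, real_inner_smul_left,
    hdQ, smul_eq_mul]
  ring

end IsConvexQuadratic

theorem isClosed_setOf_exists_forall_le_of_isConvexQuadratic [FiniteDimensional ℝ E]
    {ι : Type*} [Finite ι] {f : ι → E → ℝ} (hf : ∀ i, IsConvexQuadratic (f i)) (I : Finset ι) :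
    IsClosed {w : ι → ℝ | ∃ x, ∀ i ∈ I, f i x ≤ w i} := by
  classical
  induction I using Finset.strongInduction with
  | H I ih =>
  refine IsSeqClosed.isClosed fun w w₀ hwS hw => ?_
  have hwi : ∀ i, Tendsto (fun j => w j i) atTop (𝓝 (w₀ i)) := tendsto_pi_nhds.1 hw
  have hfeas : ∀ j, IsClosed {x | ∀ i ∈ I, f i x ≤ w j i} := fun j => by
    simp only [Set.ofPred_forall]
    exact isClosed_biInter fun i _ => isClosed_le (hf i).continuous continuous_const
  choose x hxI hxmin using fun j => (hfeas j).exists_norm_le (hwS j)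
  rcases exists_subseq_tendsto_or_tendsto_norm_atTop x with ⟨a, φ, hφ, ha⟩ | hx
  · exact ⟨a, fun i hi => le_of_tendsto_of_tendsto' (((hf i).continuous.tendsto a).comp ha)
      ((hwi i).comp hφ.tendsto_atTop) fun j => hxI (φ j) i hi⟩
  obtain ⟨d, hd, φ, hφ, hxd⟩ := exists_subseq_tendsto_inv_norm_smul hx
  choose σ hσ hfσ using fun i (hi : i ∈ I) => (hf i).exists_nonpos_slope_of_tendsto
    (hx.comp hφ.tendsto_atTop) hxd ((hwi i).comp hφ.tendsto_atTop) fun j => hxI (φ j) i hi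
  by_cases hneg : ∃ i₀, ∃ hi₀ : i₀ ∈ I, σ i₀ hi₀ < 0
  · obtain ⟨i₀, hi₀, hneg⟩ := hneg
    obtain ⟨y, hy⟩ : w₀ ∈ {w : ι → ℝ | ∃ x, ∀ i ∈ I.erase i₀, f i x ≤ w i} :=
      (ih _ (Finset.erase_ssubset hi₀)).mem_of_tendsto hw (Eventually.of_forall fun j =>
        ⟨x j, fun i hi => hxI j i (Finset.mem_of_mem_erase hi)⟩)
    set τ := max 0 ((w₀ i₀ - f i₀ y) / σ i₀ hi₀)
    have hτ : 0 ≤ τ := le_max_left _ _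
    refine ⟨y + τ • d, fun i hi => ?_⟩
    rw [hfσ i hi]
    rcases eq_or_ne i i₀ with rfl | hne
    · have := (div_le_iff_of_neg hneg).1 (le_max_right 0 ((w₀ i - f i y) / σ i hi₀))
      linarith
    · linarith [hy i (Finset.mem_erase.2 ⟨hne, hi⟩), mul_nonpos_of_nonneg_of_nonpos hτ (hσ i hi)]
  · push Not at hneg
    have horth : ∀ j, ⟪x j, d⟫ = 0 := fun j =>
      inner_eq_zero_of_forall_norm_le_norm_add_smul fun τ => hxmin j _ fun i hi => by
        rw [hfσ i hi, le_antisymm (hσ i hi) (hneg i hi), mul_zero, add_zero]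
        exact hxI j i hi
    have hlim : Tendsto (fun j => ⟪‖x (φ j)‖⁻¹ • x (φ j), d⟫) atTop (𝓝 ⟪d, d⟫) :=
      ((continuous_id.inner continuous_const).tendsto d).comp hxd
    simp only [real_inner_smul_left, horth, mul_zero] at hlim
    have := tendsto_nhds_unique tendsto_const_nhds hlim
    rw [real_inner_self_eq_norm_sq, hd] at this
    norm_num at this

end ConvexQuadratic

section Penalty

variable {ι : Type*} [Fintype ι]

theorem IsClosed.exists_forall_sum_mul_sq_max_le_of_isUpperSet {S : Set (ι → ℝ)}
    (hS : IsClosed S) (hup : IsUpperSet S) (hne : S.Nonempty) {c : ι → ℝ} (hc : ∀ i, 0 < c i)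
    (a : ι → ℝ) :
    ∃ z ∈ S, ∀ w ∈ S, ∑ i, c i * max (z i - a i) 0 ^ 2 ≤ ∑ i, c i * max (w i - a i) 0 ^ 2 := by
  set Φ : (ι → ℝ) → ℝ := fun w => ∑ i, c i * max (w i - a i) 0 ^ 2
  have hΦ : Continuous Φ := by fun_prop
  have hΦsup : ∀ w, Φ (w ⊔ a) = Φ w := fun w => Finset.sum_congr rfl fun i _ => by
    rcases le_total (w i) (a i) with h | h <;> simp [h]
  obtain ⟨w₀, hw₀⟩ := hne
  set K := {w ∈ S | a ≤ w ∧ Φ w ≤ Φ w₀}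
  have hK : IsClosed K :=
    hS.inter (isClosed_Ici.inter (isClosed_Iic.preimage hΦ))
  have hKbox : K ⊆ Set.univ.pi fun i => Set.Icc (a i) (a i + √(Φ w₀ / c i)) := by
    rintro w ⟨-, haw, hw⟩ i -
    have hterm : c i * (w i - a i) ^ 2 ≤ Φ w₀ := by
      have := Finset.single_le_sum (f := fun j => c j * max (w j - a j) 0 ^ 2)
        (fun j _ => by positivity [(hc j).le]) (Finset.mem_univ i)
      rw [max_eq_left (sub_nonneg.2 (haw i))] at this
      exact this.trans hw
    have := Real.le_sqrt_of_sq_le ((le_div_iff₀' (hc i)).2 hterm)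
    exact ⟨haw i, by linarith⟩
  obtain ⟨z, hzK, hzmin⟩ := ((isCompact_univ_pi fun i => isCompact_Icc).of_isClosed_subset hK
    hKbox).exists_isMinOn ⟨w₀ ⊔ a, hup le_sup_left hw₀, le_sup_right, (hΦsup w₀).le⟩
    hΦ.continuousOn
  refine ⟨z, hzK.1, fun w hw => ?_⟩
  change Φ z ≤ Φ w
  rw [← hΦsup w]
  by_cases hwB : Φ (w ⊔ a) ≤ Φ w₀
  · exact hzmin ⟨hup le_sup_left hw, le_sup_right, hwB⟩
  · exact hzK.2.2.trans (le_of_not_ge hwB)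

theorem exists_forall_sum_mul_sq_max_le_of_isConvexQuadratic {E : Type*}
    [NormedAddCommGroup E] [InnerProductSpace ℝ E] [FiniteDimensional ℝ E] {f : ι → E → ℝ}
    (hf : ∀ i, IsConvexQuadratic (f i)) {c : ι → ℝ} (hc : ∀ i, 0 < c i) (a : ι → ℝ) :
    ∃ x₀ : E, ∀ x,
      ∑ i, c i * max (f i x₀ - a i) 0 ^ 2 ≤ ∑ i, c i * max (f i x - a i) 0 ^ 2 := by
  have hS := isClosed_setOf_exists_forall_le_of_isConvexQuadratic hf Finset.univ
  simp only [Finset.mem_univ, true_implies] at hS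
  obtain ⟨z, ⟨x₀, hx₀⟩, hz⟩ := hS.exists_forall_sum_mul_sq_max_le_of_isUpperSet
    (fun w w' h ⟨x, hx⟩ => ⟨x, fun i => (hx i).trans (h i)⟩) ⟨_, 0, fun i => le_rfl⟩ hc a
  refine ⟨x₀, fun x => le_trans (Finset.sum_le_sum fun i _ => ?_) (hz _ ⟨x, fun i => le_rfl⟩)⟩
  gcongr
  exacts [(hc i).le, hx₀ i]

end Penalty

section Orthant

variable {ι : Type*} [Fintype ι]

def nonnegOrthant (ι : Type*) : Set (EuclideanSpace ℝ ι) := {s | ∀ i, 0 ≤ s i}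

theorem infDist_nonnegOrthant_sq (s : EuclideanSpace ℝ ι) :
    infDist s (nonnegOrthant ι) ^ 2 = ∑ i, max (-s i) 0 ^ 2 := by
  suffices infDist s (nonnegOrthant ι) = √(∑ i, max (-s i) 0 ^ 2) by
    rw [this, Real.sq_sqrt (by positivity)]
  have hmem : WithLp.toLp 2 (fun i => max (s i) 0) ∈ nonnegOrthant ι := fun i => le_max_right _ _
  refine le_antisymm ((infDist_le_dist_of_mem hmem).trans_eq ?_) ((le_infDist ⟨_, hmem⟩).2 ?_)
  · rw [EuclideanSpace.dist_eq]
    congr 1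
    refine Finset.sum_congr rfl fun i _ => ?_
    rw [Real.dist_eq, sq_abs]
    rcases le_total (s i) 0 with h | h <;> simp [h]
  · intro c hc
    rw [EuclideanSpace.dist_eq]
    gcongr with i
    rw [Real.dist_eq]
    exact max_le (by linarith [show 0 ≤ c i from hc i, neg_le_abs (s i - c i)]) (abs_nonneg _)

theorem one_div_four_mul_sq_max_le (v σ : ℝ) :
    1 / 4 * max v 0 ^ 2 ≤ 1 / 2 * (v + σ) ^ 2 + 1 / 2 * max (-σ) 0 ^ 2 := by
  rcases le_total v 0 with hv | hv <;> rcases le_total σ 0 with hσ | hσ <;>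
    simp only [max_eq_left, max_eq_right, hv, hσ, neg_nonneg, neg_nonpos] <;>
    nlinarith [sq_nonneg (v + 2 * σ)]

theorem one_div_four_mul_sum_sq_max_le (y s : EuclideanSpace ℝ ι) :
    1 / 4 * ∑ i, max (y i) 0 ^ 2 ≤
      1 / 2 * ‖y + s‖ ^ 2 + 1 / 2 * infDist s (nonnegOrthant ι) ^ 2 := by
  rw [infDist_nonnegOrthant_sq, EuclideanSpace.norm_sq_eq, Finset.mul_sum, Finset.mul_sum,
    Finset.mul_sum, ← Finset.sum_add_distrib]
  gcongr with i
  simpa using one_div_four_mul_sq_max_le (y i) (s i)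

theorem exists_one_div_four_mul_sum_sq_max_eq (y : EuclideanSpace ℝ ι) :
    ∃ s : EuclideanSpace ℝ ι, 1 / 2 * ‖y + s‖ ^ 2 +
      1 / 2 * infDist s (nonnegOrthant ι) ^ 2 =
        1 / 4 * ∑ i, max (y i) 0 ^ 2 := by
  refine ⟨WithLp.toLp 2 fun i => max (y i) 0 / 2 - y i, ?_⟩
  rw [infDist_nonnegOrthant_sq, EuclideanSpace.norm_sq_eq, Finset.mul_sum, Finset.mul_sum,
    Finset.mul_sum, ← Finset.sum_add_distrib]
  refine Finset.sum_congr rfl fun i _ => ?_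
  simp only [PiLp.add_apply, Real.norm_eq_abs, sq_abs]
  rcases le_total (y i) 0 with h | h
  · rw [max_eq_right h, max_eq_right (by linarith)]; ring
  · rw [max_eq_left h, max_eq_left (by linarith)]; ring

end Orthant

theorem stmt_16_general
    (n m : ℕ)
    (Q : EuclideanSpace ℝ (Fin n) →ₗ[ℝ] EuclideanSpace ℝ (Fin n))
    (hQsymm : ∀ x y : EuclideanSpace ℝ (Fin n), (inner ℝ (Q x) y : ℝ) = inner ℝ x (Q y))
    (hQpsd : ∀ x : EuclideanSpace ℝ (Fin n), 0 ≤ (inner ℝ x (Q x) : ℝ))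
    (p : EuclideanSpace ℝ (Fin n))
    (q : EuclideanSpace ℝ (Fin n) → ℝ)
    (hq : ∀ x, q x = (1/2) * (inner ℝ x (Q x) : ℝ) + (inner ℝ p x : ℝ))
    (C : Set (EuclideanSpace ℝ (Fin m)))
    (hC : C = {s : EuclideanSpace ℝ (Fin m) | ∀ i, 0 ≤ s i})
    (A : EuclideanSpace ℝ (Fin n) →ₗ[ℝ] EuclideanSpace ℝ (Fin m))
    (b : EuclideanSpace ℝ (Fin m))
    (r₀ : EuclideanSpace ℝ (Fin n) → EuclideanSpace ℝ (Fin m) → ℝ)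
    (hr₀ : ∀ x s, r₀ x s =
      (1/2) * ‖A x + s - b‖^2 + (1/2) * (Metric.infDist s C)^2)
    (r : EuclideanSpace ℝ (Fin n) → EuclideanSpace ℝ (Fin m) → ℝ → ℝ)
    (hr : ∀ x s t, r x s t = (1/2) * (max (q x - t) 0)^2 + r₀ x s) :
    ∀ t : ℝ, ∃ (xbar : EuclideanSpace ℝ (Fin n)) (sbar : EuclideanSpace ℝ (Fin m)),
      ∀ (x : EuclideanSpace ℝ (Fin n)) (s : EuclideanSpace ℝ (Fin m)),
        r xbar sbar t ≤ r x s t := by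
  intro t
  subst hC
  have hr' : ∀ x s, r x s t = 1 / 2 * max (q x - t) 0 ^ 2 +
      (1 / 2 * ‖(A x - b) + s‖ ^ 2 + 1 / 2 * infDist s (nonnegOrthant (Fin m)) ^ 2) :=
    fun x s => by rw [hr, hr₀, sub_add_eq_add_sub]; rfl
  let g : Option (Fin m) → EuclideanSpace ℝ (Fin n) → ℝ := fun o => o.elim q fun i x => A x i
  have hg : ∀ o, IsConvexQuadratic (g o) := by
    rintro (_ | i)
    · refine ⟨Q, innerₛₗ ℝ p, 0, Q.isPositive_iff.2 ⟨hQsymm, fun x => ?_⟩, fun x => by simp [g, hq]⟩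
      exact real_inner_comm x (Q x) ▸ hQpsd x
    · exact ⟨0, (EuclideanSpace.proj i).toLinearMap ∘ₗ A, 0, LinearMap.isPositive_zero,
        fun x => by simp [g]⟩
  obtain ⟨x₀, hx₀⟩ := exists_forall_sum_mul_sq_max_le_of_isConvexQuadratic hg
    (c := fun o => o.elim (1 / 2) fun _ => 1 / 4) (by rintro (_ | _) <;> norm_num)
    (fun o => o.elim t b)
  simp only [Fintype.sum_option, Option.elim, g, ← Finset.mul_sum] at hx₀
  obtain ⟨s₀, hs₀⟩ := exists_one_div_four_mul_sum_sq_max_eq (A x₀ - b)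
  refine ⟨x₀, s₀, fun x s => ?_⟩
  calc r x₀ s₀ t = 1 / 2 * max (q x₀ - t) 0 ^ 2 + 1 / 4 * ∑ i, max ((A x₀ - b) i) 0 ^ 2 := by
        rw [hr', hs₀]
    _ ≤ 1 / 2 * max (q x - t) 0 ^ 2 + 1 / 4 * ∑ i, max ((A x - b) i) 0 ^ 2 := by
        simpa using hx₀ x
    _ ≤ r x s t := by
        rw [hr']
        gcongr
        exact one_div_four_mul_sum_sq_max_le _ _

/-- Theorem 6(1): in the QP setting, the merit-function infimum is attained
for every `t`. -/
theorem stmt_16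
    (n m : ℕ)
    (Q : EuclideanSpace ℝ (Fin n) →ₗ[ℝ] EuclideanSpace ℝ (Fin n))
    (hQsymm : ∀ x y : EuclideanSpace ℝ (Fin n), (inner ℝ (Q x) y : ℝ) = inner ℝ x (Q y))
    (hQpsd : ∀ x : EuclideanSpace ℝ (Fin n), 0 ≤ (inner ℝ x (Q x) : ℝ))
    (p : EuclideanSpace ℝ (Fin n))
    (q : EuclideanSpace ℝ (Fin n) → ℝ)
    (hq : ∀ x, q x = (1/2) * (inner ℝ x (Q x) : ℝ) + (inner ℝ p x : ℝ))
    (C : Set (EuclideanSpace ℝ (Fin m)))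
    (hC : C = {s : EuclideanSpace ℝ (Fin m) | ∀ i, 0 ≤ s i})
    (A : EuclideanSpace ℝ (Fin n) →ₗ[ℝ] EuclideanSpace ℝ (Fin m))
    (b : EuclideanSpace ℝ (Fin m))
    (r₀ : EuclideanSpace ℝ (Fin n) → EuclideanSpace ℝ (Fin m) → ℝ)
    (hr₀ : ∀ x s, r₀ x s =
      (1/2) * ‖A x + s - b‖^2 + (1/2) * (Metric.infDist s C)^2)
    (r : EuclideanSpace ℝ (Fin n) → EuclideanSpace ℝ (Fin m) → ℝ → ℝ)
    (hr : ∀ x s t, r x s t = (1/2) * (max (q x - t) 0)^2 + r₀ x s)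
    (rstar : ℝ → ℝ)
    (hrstar : ∀ t, rstar t =
      ⨅ z : EuclideanSpace ℝ (Fin n) × EuclideanSpace ℝ (Fin m), r z.1 z.2 t) :
    ∀ t : ℝ, ∃ (xbar : EuclideanSpace ℝ (Fin n)) (sbar : EuclideanSpace ℝ (Fin m)),
      ∀ (x : EuclideanSpace ℝ (Fin n)) (s : EuclideanSpace ℝ (Fin m)),
        r xbar sbar t ≤ r x s t :=
  stmt_16_general n m Q hQsymm hQpsd p q hq C hC A b r₀ hr₀ r hr
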